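/- The graph G* produced by the Droogendijk construction from a triangle-free graph G is triangle-free. -/

import Mathlib

set_option linter.unreachableTactic false
set_option linter.unusedTactic false
set_option linter.unnecessarySeqFocus false

/-- The set `A` of neighbours of the independent set `S` in `G`. -/
def droogA {V : Type} (G : SimpleGraph V) (S : Set V) : Set V :=
  {v : V | v ∉ S ∧ ∃ w ∈ S, G.Adj v w}

/-- The set `B` of non-neighbours of `S` in `G` (outside `S`). -/
def droogB {V : Type} (G : SimpleGraph V) (S : Set V) : Set V :=
  {v : V | v ∉ S ∧ ∀ w ∈ S, ¬ G.Adj v w}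

/-- Vertex type of the Droogendijk graph `G*`: the original vertices, copies `A'` and `B'`
of `A` and `B`, and the two new vertices `α` (coded `false`) and `β` (coded `true`). -/
abbrev DroogVertex {V : Type} (G : SimpleGraph V) (S : Set V) : Type :=
  V ⊕ ((droogA G S ⊕ droogB G S) ⊕ Bool)

/-- The vertex `α` of `G*`. -/
def droogAlpha {V : Type} (G : SimpleGraph V) (S : Set V) : DroogVertex G S :=
  Sum.inr (Sum.inr false)

/-- The vertex `β` of `G*`. -/
def droogBeta {V : Type} (G : SimpleGraph V) (S : Set V) : DroogVertex G S :=
  Sum.inr (Sum.inr true)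

/-- Adjacency of the Droogendijk graph `G*`: `G` on the original vertices, each copy vertex
joined to the `G`-neighbours of its original, `α` joined to `S ∪ B'`, and `β` joined to
`A' ∪ B'`. -/
def droogAdj {V : Type} (G : SimpleGraph V) (S : Set V) :
    DroogVertex G S → DroogVertex G S → Prop
  | Sum.inl x, Sum.inl y => G.Adj x y
  | Sum.inl x, Sum.inr (Sum.inl (Sum.inl a)) => G.Adj x a.1
  | Sum.inr (Sum.inl (Sum.inl a)), Sum.inl x => G.Adj x a.1
  | Sum.inl x, Sum.inr (Sum.inl (Sum.inr b)) => G.Adj x b.1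
  | Sum.inr (Sum.inl (Sum.inr b)), Sum.inl x => G.Adj x b.1
  | Sum.inl x, Sum.inr (Sum.inr false) => x ∈ S
  | Sum.inr (Sum.inr false), Sum.inl x => x ∈ S
  | Sum.inr (Sum.inl (Sum.inl _)), Sum.inr (Sum.inr true) => True
  | Sum.inr (Sum.inr true), Sum.inr (Sum.inl (Sum.inl _)) => True
  | Sum.inr (Sum.inl (Sum.inr _)), Sum.inr (Sum.inr _) => True
  | Sum.inr (Sum.inr _), Sum.inr (Sum.inl (Sum.inr _)) => True
  | _, _ => False

/-- The Droogendijk graph `G*` built from `G` and the independent set `S`. -/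
def droog {V : Type} (G : SimpleGraph V) (S : Set V) : SimpleGraph (DroogVertex G S) where
  Adj := droogAdj G S
  symm := ⟨by
    rintro (x | ((a | b) | (_ | _))) (y | ((a' | b') | (_ | _))) h <;>
      simp only [droogAdj] at h ⊢ <;> first | exact G.adj_symm h | exact h | trivial⟩
  loopless := ⟨by
    rintro (x | ((a | b) | (_ | _))) h <;> simp only [droogAdj] at h <;>
      first | exact G.irrefl h | exact h | exact h.elim⟩

/-!
The neighbourhoods of `α` and `β` in `G*`, namely `S ∪ B'` and `A' ∪ B'`, are independent: `S` is
independent, no vertex of `B` has a neighbour in `S`, and the copies are pairwise non-adjacent. So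
a triangle of `G*` avoids `α` and `β`, and collapsing every copy onto its original vertex, which is
a homomorphism from `G* - {α, β}` to `G`, turns it into a triangle of `G`.
-/

namespace SimpleGraph

variable {V W : Type*} {G : SimpleGraph V} {H : SimpleGraph W}

theorem cliqueFree_three_of_isIndepSet_neighborSet_of_hom (hG : G.CliqueFree 3) (T : Set W)
    (hT : ∀ t ∈ T, H.IsIndepSet (H.neighborSet t)) (f : H.induce (Tᶜ : Set W) →g G) :
    H.CliqueFree 3 := by
  classical
  intro s hs
  obtain ⟨a, b, c, hab, hac, hbc, -⟩ := is3Clique_iff.mp hs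
  by_cases ha : a ∈ T
  · exact hT a ha hab hac hbc.ne hbc
  by_cases hb : b ∈ T
  · exact hT b hb hab.symm hbc hac.ne hac
  by_cases hc : c ∈ T
  · exact hT c hc hac.symm hbc.symm hab.ne hab
  exact hG {f ⟨a, ha⟩, f ⟨b, hb⟩, f ⟨c, hc⟩} <|
    is3Clique_triple_iff.mpr ⟨f.map_adj hab, f.map_adj hac, f.map_adj hbc⟩

end SimpleGraph

section Droogendijk

variable {V : Type} (G : SimpleGraph V) (S : Set V)

theorem isIndepSet_neighborSet_droogAlpha (hS : ∀ a ∈ S, ∀ b ∈ S, ¬ G.Adj a b) :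
    (droog G S).IsIndepSet ((droog G S).neighborSet (droogAlpha G S)) := by
  rintro (x | ((a | b) | (_ | _))) hu (y | ((a' | b') | (_ | _))) hv - huv <;>
    simp only [droog, droogAlpha, droogAdj, SimpleGraph.mem_neighborSet] at hu hv huv
  · exact hS x hu y hv huv
  · exact b'.2.2 x hu huv.symm
  · exact b.2.2 y hv huv.symm

theorem isIndepSet_neighborSet_droogBeta :
    (droog G S).IsIndepSet ((droog G S).neighborSet (droogBeta G S)) := by
  rintro (x | ((a | b) | (_ | _))) hu (y | ((a' | b') | (_ | _))) hv - huv <;>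
    simp only [droog, droogBeta, droogAdj, SimpleGraph.mem_neighborSet] at hu hv huv

def droogShadow :
    (droog G S).induce ({droogAlpha G S, droogBeta G S}ᶜ : Set (DroogVertex G S)) →g G where
  toFun
    | ⟨Sum.inl x, _⟩ => x
    | ⟨Sum.inr (Sum.inl (Sum.inl a)), _⟩ => a
    | ⟨Sum.inr (Sum.inl (Sum.inr b)), _⟩ => b
    | ⟨Sum.inr (Sum.inr c), h⟩ => absurd h (by cases c <;> simp [droogAlpha, droogBeta])
  map_rel' := by
    rintro ⟨x | ((a | b) | (_ | _)), hu⟩ ⟨y | ((a' | b') | (_ | _)), hv⟩ huv <;>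
      simp [droogAlpha, droogBeta] at hu hv <;>
      simp_all [droog, droogAdj, G.adj_comm]

end Droogendijk

/-- The Droogendijk graph `G*` produced from a triangle-free graph `G` (with independent
set `S`) is triangle-free. -/
theorem stmt_11 {V : Type} (G : SimpleGraph V) (S : Set V)
    (hTF : G.CliqueFree 3) (hS : ∀ a ∈ S, ∀ b ∈ S, ¬ G.Adj a b) :
    (droog G S).CliqueFree 3 :=
  SimpleGraph.cliqueFree_three_of_isIndepSet_neighborSet_of_hom hTF _
    (by
      rintro t (rfl | rfl)
      exacts [isIndepSet_neighborSet_droogAlpha G S hS, isIndepSet_neighborSet_droogBeta G S])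
    (droogShadow G S)
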